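/- Let γ=(x,z): (I,t₀) → (ℝ²,0) and γ̃=(x̃,z̃): (Ĩ,t̃₀) → (ℝ²,0) be smooth curves, and let 𝐳(t,θ)=(x(t)cosθ, x(t)sinθ, z(t)) and 𝐳̃ be their surfaces of revolution around the z-axis, map-germs (I×[0,2π),(t₀,θ₀)) → (ℝ³,0) and (Ĩ×[0,2π),(t̃₀,θ₀)) → (ℝ³,0). (1) If there exist a diffeomorphism germ φ: (I,t₀) → (Ĩ,t̃₀) and a diffeomorphism germ ψ: (ℝ²,0) → (ℝ²,0) of the form ψ(X,Z) = (X, ϕ(X²,Z)) for a smooth function ϕ, such that ψ∘γ = γ̃∘φ, then Φ(t,θ) = (φ(t),θ) and Ψ(X,Y,Z) = (X, Y, ϕ(X²+Y²,Z)) are diffeomorphism germs with Ψ∘𝐳 = 𝐳̃∘Φ near (t₀,θ₀). (2) Conversely, if there exist a diffeomorphism germ Φ of the form Φ(t,θ) = (φ(t),θ) and a diffeomorphism germ Ψ: (ℝ³,0) → (ℝ³,0) of the form Ψ(X,Y,Z) = (X, Y, ϕ(X²+Y²,Z)) with Ψ∘𝐳 = 𝐳̃∘Φ, then ψ(X,Z)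 = (X, ϕ(X²,Z)) is a diffeomorphism germ of (ℝ²,0) with ψ∘γ = γ̃∘φ near t₀. -/

import Mathlib

open Real

/-- `f` is a germ of diffeomorphism at `p`, sending `p` to `q`: `f` is smooth near `p`
and has a smooth local inverse near `q`. -/
def DiffeoGermAt {E F : Type*} [NormedAddCommGroup E] [NormedSpace ℝ E]
    [NormedAddCommGroup F] [NormedSpace ℝ F] (f : E → F) (p : E) (q : F) : Prop :=
  f p = q ∧ ∃ (U : Set E) (V : Set F) (g : F → E),
    IsOpen U ∧ p ∈ U ∧ IsOpen V ∧ q ∈ V ∧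
    ContDiffOn ℝ (⊤ : ℕ∞) f U ∧ ContDiffOn ℝ (⊤ : ℕ∞) g V ∧
    Set.MapsTo f U V ∧ Set.MapsTo g V U ∧
    (∀ p' ∈ U, g (f p') = p') ∧ (∀ q' ∈ V, f (g q') = q')

/-!
Since `X²` and `X² + Y²` have vanishing differential at the origin, the differentials there of
`ψ(X, Z) = (X, ϕ(X², Z))` and of `Ψ(X, Y, Z) = (X, Y, ϕ(X² + Y², Z))` are `id × ∂_Z ϕ(0, 0)` and
`id × id × ∂_Z ϕ(0, 0)`. By the inverse function theorem each of them is a diffeomorphism germ of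
the origin exactly when `ϕ(0, 0) = 0` and `∂_Z ϕ(0, 0) ≠ 0`, so `ψ` is one iff `Ψ` is. The two
conjugacy relations agree pointwise, because `(x cos θ)² + (x sin θ)² = x²` and
`(x cos θ, x sin θ)` determines `x`.
-/

open Function Filter Topology ContinuousLinearMap

section DiffeoGerm

variable {E F G H : Type*} [NormedAddCommGroup E] [NormedSpace ℝ E]
  [NormedAddCommGroup F] [NormedSpace ℝ F] [NormedAddCommGroup G] [NormedSpace ℝ G]
  [NormedAddCommGroup H] [NormedSpace ℝ H]

lemma coe_top_ne_zero : ((⊤ : ℕ∞) : WithTop ℕ∞) ≠ 0 := by simp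

theorem DiffeoGermAt.injective_fderiv {f : E → F} {p : E} {q : F} (hf : DiffeoGermAt f p q) :
    Injective (fderiv ℝ f p) := by
  obtain ⟨rfl, U, V, g, hU, hpU, hV, hqV, hfU, hgV, -, -, hgf, -⟩ := hf
  have hf' := (hfU.contDiffAt (hU.mem_nhds hpU)).differentiableAt coe_top_ne_zero
  have hg' := (hgV.contDiffAt (hV.mem_nhds hqV)).differentiableAt coe_top_ne_zero
  have hgf_id : g ∘ f =ᶠ[𝓝 p] id := eventually_of_mem (hU.mem_nhds hpU) hgf
  have hchain : (fderiv ℝ g (f p)).comp (fderiv ℝ f p) = ContinuousLinearMap.id ℝ E := by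
    rw [← fderiv_comp p hg' hf', hgf_id.fderiv_eq, fderiv_id]
  exact LeftInverse.injective (g := fderiv ℝ g (f p)) fun v => congr($hchain v)

theorem diffeoGermAt_of_hasFDerivAt [CompleteSpace E] {f : E → F} {f' : E ≃L[ℝ] F} {p : E}
    (hf : ContDiff ℝ (⊤ : ℕ∞) f) (hf' : HasFDerivAt f (f' : E →L[ℝ] F) p) :
    DiffeoGermAt f p (f p) := by
  set e := hf.contDiffAt.toOpenPartialHomeomorph f hf' coe_top_ne_zero
  have he : ⇑e = f := rfl
  -- Shrink the source to where the derivative stays invertible, so that `e.symm` is smooth.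
  set W := fderiv ℝ f ⁻¹' Set.range ((↑) : (E ≃L[ℝ] F) → E →L[ℝ] F)
  have hW : IsOpen W := ContinuousLinearEquiv.isOpen.preimage (hf.continuous_fderiv coe_top_ne_zero)
  set U := e.source ∩ W
  have hpU : p ∈ U := ⟨hf.contDiffAt.mem_toOpenPartialHomeomorph_source hf' _, f', hf'.fderiv.symm⟩
  have hV : IsOpen (f '' U) := he ▸ e.isOpen_image_of_subset_source (e.open_source.inter hW)
    Set.inter_subset_left
  have hleft : ∀ a ∈ U, e.symm (f a) = a := fun a ha => e.left_inv ha.1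
  refine ⟨rfl, U, f '' U, e.symm, e.open_source.inter hW, hpU, hV, ⟨p, hpU, rfl⟩,
    hf.contDiffOn, ?_, Set.mapsTo_image f U, ?_, hleft, ?_⟩
  · rintro _ ⟨a, ha, rfl⟩
    obtain ⟨a', ha'⟩ := ha.2
    refine (e.contDiffAt_symm (f₀' := a') (e.map_source ha.1) ?_ ?_).contDiffWithinAt
    · rw [e.left_inv ha.1, he, ha']
      exact (hf.differentiable coe_top_ne_zero a).hasFDerivAt
    · rw [e.left_inv ha.1]
      exact hf.contDiffAt
  · rintro _ ⟨a, ha, rfl⟩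
    rwa [hleft a ha]
  · rintro _ ⟨a, ha, rfl⟩
    rw [hleft a ha]

theorem diffeoGermAt_iff [FiniteDimensional ℝ E] {f : E → E} {p q : E}
    (hf : ContDiff ℝ (⊤ : ℕ∞) f) :
    DiffeoGermAt f p q ↔ f p = q ∧ Injective (fderiv ℝ f p) := by
  refine ⟨fun h => ⟨h.1, h.injective_fderiv⟩, fun ⟨hpq, hinj⟩ => hpq ▸ ?_⟩
  let f' := (LinearEquiv.ofInjectiveEndo (fderiv ℝ f p : E →ₗ[ℝ] E) hinj).toContinuousLinearEquiv
  exact diffeoGermAt_of_hasFDerivAt (f' := f') hf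
    ((hf.differentiable coe_top_ne_zero p).hasFDerivAt.congr_fderiv (by ext; rfl))

theorem DiffeoGermAt.prodMap {f : E → F} {g : G → H} {p : E} {q : F} {p' : G} {q' : H}
    (hf : DiffeoGermAt f p q) (hg : DiffeoGermAt g p' q') :
    DiffeoGermAt (Prod.map f g) (p, p') (q, q') := by
  obtain ⟨hfp, U, V, f₁, hU, hpU, hV, hqV, hfU, hf₁V, hfUV, hf₁VU, hf₁f, hff₁⟩ := hf
  obtain ⟨hgp, U', V', g₁, hU', hpU', hV', hqV', hgU', hg₁V', hgUV', hg₁VU', hg₁g, hgg₁⟩ := hg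
  refine ⟨Prod.ext hfp hgp, U ×ˢ U', V ×ˢ V', Prod.map f₁ g₁, hU.prod hU', ⟨hpU, hpU'⟩,
    hV.prod hV', ⟨hqV, hqV'⟩, hfU.prodMap hgU', hf₁V.prodMap hg₁V', hfUV.prodMap hgUV',
    hf₁VU.prodMap hg₁VU', fun a ha => Prod.ext (hf₁f _ ha.1) (hg₁g _ ha.2),
    fun b hb => Prod.ext (hff₁ _ hb.1) (hgg₁ _ hb.2)⟩

theorem diffeoGermAt_id (p : E) : DiffeoGermAt id p p :=
  ⟨rfl, Set.univ, Set.univ, id, isOpen_univ, trivial, isOpen_univ, trivial, contDiffOn_id,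
    contDiffOn_id, Set.mapsTo_univ _ _, Set.mapsTo_univ _ _, fun _ _ => rfl, fun _ _ => rfl⟩

end DiffeoGerm

section AxialMaps

variable {ϕ : ℝ × ℝ → ℝ}

theorem hasFDerivAt_profileMap (hϕ : DifferentiableAt ℝ ϕ (0, 0)) :
    HasFDerivAt (fun p : ℝ × ℝ => (p.1, ϕ (p.1 ^ 2, p.2)))
      ((ContinuousLinearMap.id ℝ ℝ).prodMap ((fderiv ℝ ϕ (0, 0)).comp (inr ℝ ℝ ℝ))) (0, 0) := by
  have hsq : HasFDerivAt (fun p : ℝ × ℝ => (p.1 ^ 2, p.2)) ((inr ℝ ℝ ℝ).comp (snd ℝ ℝ ℝ))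
      (0, 0) := by
    refine ((hasFDerivAt_fst.pow 2).prodMk
      (hasFDerivAt_snd (p := ((0 : ℝ), (0 : ℝ))))).congr_fderiv ?_
    ext <;> simp
  have hϕ' : HasFDerivAt ϕ (fderiv ℝ ϕ (0, 0)) ((0 : ℝ) ^ 2, (0 : ℝ)) := by
    simpa using hϕ.hasFDerivAt
  refine (hasFDerivAt_fst.prodMk (hϕ'.comp (0, 0) hsq)).congr_fderiv ?_
  ext <;> simp

theorem hasFDerivAt_revolutionMap (hϕ : DifferentiableAt ℝ ϕ (0, 0)) :
    HasFDerivAt (fun q : ℝ × ℝ × ℝ => (q.1, q.2.1, ϕ (q.1 ^ 2 + q.2.1 ^ 2, q.2.2)))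
      ((ContinuousLinearMap.id ℝ ℝ).prodMap
        ((ContinuousLinearMap.id ℝ ℝ).prodMap ((fderiv ℝ ϕ (0, 0)).comp (inr ℝ ℝ ℝ))))
      (0, 0, 0) := by
  have hsq : HasFDerivAt (fun q : ℝ × ℝ × ℝ => (q.1 ^ 2 + q.2.1 ^ 2, q.2.2))
      ((inr ℝ ℝ ℝ).comp ((snd ℝ ℝ ℝ).comp (snd ℝ ℝ (ℝ × ℝ)))) (0, 0, 0) := by
    refine (((hasFDerivAt_fst.pow 2).add (hasFDerivAt_snd.fst.pow 2)).prodMk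
      (hasFDerivAt_snd (p := ((0 : ℝ), (0 : ℝ), (0 : ℝ)))).snd).congr_fderiv ?_
    ext <;> simp
  have hϕ' : HasFDerivAt ϕ (fderiv ℝ ϕ (0, 0)) ((0 : ℝ) ^ 2 + (0 : ℝ) ^ 2, (0 : ℝ)) := by
    simpa using hϕ.hasFDerivAt
  refine (hasFDerivAt_fst.prodMk
    (hasFDerivAt_snd.fst.prodMk (hϕ'.comp (0, 0, 0) hsq))).congr_fderiv ?_
  ext <;> simp

theorem diffeoGermAt_profileMap_iff (hϕ : ContDiff ℝ (⊤ : ℕ∞) ϕ) :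
    DiffeoGermAt (fun p : ℝ × ℝ => (p.1, ϕ (p.1 ^ 2, p.2))) ((0 : ℝ), (0 : ℝ))
      ((0 : ℝ), (0 : ℝ)) ↔ ϕ (0, 0) = 0 ∧ Injective ((fderiv ℝ ϕ (0, 0)).comp (inr ℝ ℝ ℝ)) := by
  have hψ : ContDiff ℝ (⊤ : ℕ∞) (fun p : ℝ × ℝ => (p.1, ϕ (p.1 ^ 2, p.2))) := by fun_prop
  rw [diffeoGermAt_iff hψ, (hasFDerivAt_profileMap (hϕ.differentiable coe_top_ne_zero _)).fderiv,
    coe_prodMap', Prod.map_injective]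
  simp [injective_id]

theorem diffeoGermAt_revolutionMap_iff (hϕ : ContDiff ℝ (⊤ : ℕ∞) ϕ) :
    DiffeoGermAt (fun q : ℝ × ℝ × ℝ => (q.1, q.2.1, ϕ (q.1 ^ 2 + q.2.1 ^ 2, q.2.2)))
      ((0 : ℝ), (0 : ℝ), (0 : ℝ)) ((0 : ℝ), (0 : ℝ), (0 : ℝ)) ↔
      ϕ (0, 0) = 0 ∧ Injective ((fderiv ℝ ϕ (0, 0)).comp (inr ℝ ℝ ℝ)) := by
  have hΨ : ContDiff ℝ (⊤ : ℕ∞)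
      (fun q : ℝ × ℝ × ℝ => (q.1, q.2.1, ϕ (q.1 ^ 2 + q.2.1 ^ 2, q.2.2))) := by fun_prop
  rw [diffeoGermAt_iff hΨ,
    (hasFDerivAt_revolutionMap (hϕ.differentiable coe_top_ne_zero _)).fderiv,
    coe_prodMap', Prod.map_injective, coe_prodMap', Prod.map_injective]
  simp [injective_id]

end AxialMaps

theorem revolution_eq_iff (ϕ : ℝ × ℝ → ℝ) (a b u v θ : ℝ) :
    (a * cos θ, a * sin θ, ϕ ((a * cos θ) ^ 2 + (a * sin θ) ^ 2, u)) =
        (b * cos θ, b * sin θ, v) ↔ (a, ϕ (a ^ 2, u)) = (b, v) := by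
  have hsq : (a * cos θ) ^ 2 + (a * sin θ) ^ 2 = a ^ 2 := by
    linear_combination a ^ 2 * sin_sq_add_cos_sq θ
  simp only [Prod.mk.injEq, hsq]
  constructor
  · rintro ⟨hc, hs, hv⟩
    exact ⟨by linear_combination cos θ * hc + sin θ * hs - (a - b) * sin_sq_add_cos_sq θ, hv⟩
  · rintro ⟨rfl, hv⟩
    exact ⟨rfl, rfl, hv⟩

theorem equivalence_of_surfaces_of_revolution_profile_curve_through_axis_general
    (x z x' z' : ℝ → ℝ) (t₀ t₀' θ₀ : ℝ) :
    -- (1)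
    (∀ (φ : ℝ → ℝ) (ϕ : ℝ × ℝ → ℝ), ContDiff ℝ (⊤ : ℕ∞) ϕ →
      DiffeoGermAt φ t₀ t₀' →
      DiffeoGermAt (fun p : ℝ × ℝ => (p.1, ϕ (p.1 ^ 2, p.2)))
        ((0 : ℝ), (0 : ℝ)) ((0 : ℝ), (0 : ℝ)) →
      (∀ᶠ t in nhds t₀, (x t, ϕ ((x t) ^ 2, z t)) = (x' (φ t), z' (φ t))) →
      DiffeoGermAt (fun p : ℝ × ℝ => (φ p.1, p.2)) (t₀, θ₀) (t₀', θ₀) ∧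
      DiffeoGermAt (fun q : ℝ × ℝ × ℝ => (q.1, q.2.1, ϕ (q.1 ^ 2 + q.2.1 ^ 2, q.2.2)))
        ((0 : ℝ), (0 : ℝ), (0 : ℝ)) ((0 : ℝ), (0 : ℝ), (0 : ℝ)) ∧
      ∀ᶠ p : ℝ × ℝ in nhds (t₀, θ₀),
        (x p.1 * cos p.2, x p.1 * sin p.2, ϕ ((x p.1 * cos p.2) ^ 2 + (x p.1 * sin p.2) ^ 2, z p.1)) =
          (x' (φ p.1) * cos p.2, x' (φ p.1) * sin p.2, z' (φ p.1))) ∧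
    -- (2)
    (∀ (φ : ℝ → ℝ) (ϕ : ℝ × ℝ → ℝ), ContDiff ℝ (⊤ : ℕ∞) ϕ →
      DiffeoGermAt (fun p : ℝ × ℝ => (φ p.1, p.2)) (t₀, θ₀) (t₀', θ₀) →
      DiffeoGermAt (fun q : ℝ × ℝ × ℝ => (q.1, q.2.1, ϕ (q.1 ^ 2 + q.2.1 ^ 2, q.2.2)))
        ((0 : ℝ), (0 : ℝ), (0 : ℝ)) ((0 : ℝ), (0 : ℝ), (0 : ℝ)) →
      (∀ᶠ p : ℝ × ℝ in nhds (t₀, θ₀),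
        (x p.1 * cos p.2, x p.1 * sin p.2, ϕ ((x p.1 * cos p.2) ^ 2 + (x p.1 * sin p.2) ^ 2, z p.1)) =
          (x' (φ p.1) * cos p.2, x' (φ p.1) * sin p.2, z' (φ p.1))) →
      DiffeoGermAt (fun p : ℝ × ℝ => (p.1, ϕ (p.1 ^ 2, p.2)))
        ((0 : ℝ), (0 : ℝ)) ((0 : ℝ), (0 : ℝ)) ∧
      ∀ᶠ t in nhds t₀, (x t, ϕ ((x t) ^ 2, z t)) = (x' (φ t), z' (φ t))) := by
  refine ⟨fun φ ϕ hϕ hφ hψ hcurve => ⟨hφ.prodMap (diffeoGermAt_id θ₀), ?_, ?_⟩,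
    fun φ ϕ hϕ _ hΨ hsurface => ⟨?_, ?_⟩⟩
  · exact (diffeoGermAt_revolutionMap_iff hϕ).2 ((diffeoGermAt_profileMap_iff hϕ).1 hψ)
  · filter_upwards [continuousAt_fst.eventually hcurve] with p hp
    exact (revolution_eq_iff ϕ _ _ _ _ _).2 hp
  · exact (diffeoGermAt_profileMap_iff hϕ).2 ((diffeoGermAt_revolutionMap_iff hϕ).1 hΨ)
  · have hslice : ContinuousAt (fun t : ℝ => (t, θ₀)) t₀ := by fun_prop
    filter_upwards [hslice.eventually hsurface] with t ht
    exact (revolution_eq_iff ϕ _ _ _ _ _).1 ht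

/-- Let `γ = (x, z) : (I, t₀) → (ℝ², 0)` and
`γ' = (x', z') : (I', t₀') → (ℝ², 0)` be smooth curves, and `𝐳`, `𝐳'` their surfaces of
revolution around the z-axis, germs at `(t₀, θ₀)`, `(t₀', θ₀)` mapping to `(ℝ³, 0)`.
(1) If a diffeomorphism germ `φ : (I, t₀) → (I', t₀')` and a diffeomorphism germ
`ψ(X,Z) = (X, ϕ(X², Z))` of `(ℝ², 0)` (for smooth `ϕ`) satisfy `ψ ∘ γ = γ' ∘ φ`, then
`Φ(t,θ) = (φ t, θ)` and `Ψ(X,Y,Z) = (X, Y, ϕ(X² + Y², Z))` are diffeomorphism germs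
with `Ψ ∘ 𝐳 = 𝐳' ∘ Φ` near `(t₀, θ₀)`.
(2) Conversely, if such `Φ` and `Ψ` are diffeomorphism germs with `Ψ ∘ 𝐳 = 𝐳' ∘ Φ`,
then `ψ(X,Z) = (X, ϕ(X², Z))` is a diffeomorphism germ of `(ℝ², 0)` with
`ψ ∘ γ = γ' ∘ φ` near `t₀`. -/
theorem equivalence_of_surfaces_of_revolution_profile_curve_through_axis
    (x z x' z' : ℝ → ℝ) (t₀ t₀' θ₀ : ℝ)
    (hx : ContDiff ℝ (⊤ : ℕ∞) x) (hz : ContDiff ℝ (⊤ : ℕ∞) z)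
    (hx' : ContDiff ℝ (⊤ : ℕ∞) x') (hz' : ContDiff ℝ (⊤ : ℕ∞) z')
    (hγ0 : x t₀ = 0 ∧ z t₀ = 0) (hγ0' : x' t₀' = 0 ∧ z' t₀' = 0) :
    -- (1)
    (∀ (φ : ℝ → ℝ) (ϕ : ℝ × ℝ → ℝ), ContDiff ℝ (⊤ : ℕ∞) ϕ →
      DiffeoGermAt φ t₀ t₀' →
      DiffeoGermAt (fun p : ℝ × ℝ => (p.1, ϕ (p.1 ^ 2, p.2)))
        ((0 : ℝ), (0 : ℝ)) ((0 : ℝ), (0 : ℝ)) →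
      (∀ᶠ t in nhds t₀, (x t, ϕ ((x t) ^ 2, z t)) = (x' (φ t), z' (φ t))) →
      DiffeoGermAt (fun p : ℝ × ℝ => (φ p.1, p.2)) (t₀, θ₀) (t₀', θ₀) ∧
      DiffeoGermAt (fun q : ℝ × ℝ × ℝ => (q.1, q.2.1, ϕ (q.1 ^ 2 + q.2.1 ^ 2, q.2.2)))
        ((0 : ℝ), (0 : ℝ), (0 : ℝ)) ((0 : ℝ), (0 : ℝ), (0 : ℝ)) ∧
      ∀ᶠ p : ℝ × ℝ in nhds (t₀, θ₀),
        (x p.1 * cos p.2, x p.1 * sin p.2, ϕ ((x p.1 * cos p.2) ^ 2 + (x p.1 * sin p.2) ^ 2, z p.1)) =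
          (x' (φ p.1) * cos p.2, x' (φ p.1) * sin p.2, z' (φ p.1))) ∧
    -- (2)
    (∀ (φ : ℝ → ℝ) (ϕ : ℝ × ℝ → ℝ), ContDiff ℝ (⊤ : ℕ∞) ϕ →
      DiffeoGermAt (fun p : ℝ × ℝ => (φ p.1, p.2)) (t₀, θ₀) (t₀', θ₀) →
      DiffeoGermAt (fun q : ℝ × ℝ × ℝ => (q.1, q.2.1, ϕ (q.1 ^ 2 + q.2.1 ^ 2, q.2.2)))
        ((0 : ℝ), (0 : ℝ), (0 : ℝ)) ((0 : ℝ), (0 : ℝ), (0 : ℝ)) →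
      (∀ᶠ p : ℝ × ℝ in nhds (t₀, θ₀),
        (x p.1 * cos p.2, x p.1 * sin p.2, ϕ ((x p.1 * cos p.2) ^ 2 + (x p.1 * sin p.2) ^ 2, z p.1)) =
          (x' (φ p.1) * cos p.2, x' (φ p.1) * sin p.2, z' (φ p.1))) →
      DiffeoGermAt (fun p : ℝ × ℝ => (p.1, ϕ (p.1 ^ 2, p.2)))
        ((0 : ℝ), (0 : ℝ)) ((0 : ℝ), (0 : ℝ)) ∧
      ∀ᶠ t in nhds t₀, (x t, ϕ ((x t) ^ 2, z t)) = (x' (φ t), z' (φ t))) :=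
  equivalence_of_surfaces_of_revolution_profile_curve_through_axis_general x z x' z' t₀ t₀' θ₀
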